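/- arXiv:1906.11740 — 3 statements merged into one kernel-verified Lean document; each statement's English description precedes it below -/
import Mathlib

section
/- Let β ∈ (0,∞) and μ ∈ ℝ, and let f_β(x) = (1+e^{βx})^{−1} denote the Fermi–Dirac distribution. Then there exists a function G, holomorphic on the open set Ω_β := ℂ \ {μ + ir : r ∈ ℝ, |r| ≥ π/β}, such that G(x) = (2/β)·log(1 − f_β(x−μ)) for every real x (here 1 − f_β(x−μ) ∈ (0,1), so the real logarithm is used). Moreover, since Ω_β is connected and contains ℝ, such a holomorphic extension is unique. -/
/-!
On the real axis `1 - f_β(x - μ) = (1 + e^{-β(x-μ)})⁻¹`, so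
`𝔤^β(x;μ) = -(2/β) log(1 + e^{-β(x-μ)}) = 2(x-μ) - (2/β) log(1 + e^{β(x-μ)})`.
The principal branch of `w ↦ log(1 + e^w)` is holomorphic where `Re w < 0` or `|Im w| < π`,
since there `1 + e^w` avoids `(-∞, 0]`. Hence the first expression is holomorphic on
`{Re z > μ} ∪ {|Im z| < π/β}` and the second on `{Re z < μ}`; the two overlap in a convex set
meeting `ℝ`, where they agree by the identity theorem, so they glue to a holomorphic function on
their union `Ω_β`. Uniqueness is the identity theorem on the connected set `Ω_β`.
-/

/-- The Fermi–Dirac distribution `f_β(x) = (1 + e^{βx})⁻¹`. -/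
noncomputable def fermiDirac (β x : ℝ) : ℝ := (1 + Real.exp (β * x))⁻¹

/-- `𝔤^β(x;μ) = (2/β)·log(1 − f_β(x−μ))` for real `x`. -/
noncomputable def gBeta (β μ x : ℝ) : ℝ := (2 / β) * Real.log (1 - fermiDirac β (x - μ))

/-- The open set `Ω_β = ℂ \ {μ + ir : r ∈ ℝ, |r| ≥ π/β}`. -/
def OmegaSet (β μ : ℝ) : Set ℂ :=
  {z : ℂ | ∀ r : ℝ, Real.pi / β ≤ |r| → z ≠ (μ : ℂ) + (r : ℂ) * Complex.I}

open Complex Set Filter Topology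

section Gluing

variable {𝕜 E F : Type*} [NontriviallyNormedField 𝕜] [NormedAddCommGroup E] [NormedSpace 𝕜 E]
  [NormedAddCommGroup F] [NormedSpace 𝕜 F]

theorem DifferentiableOn.piecewise_of_eqOn_inter {U V : Set E} [∀ z, Decidable (z ∈ U)]
    {f g : E → F} (hU : IsOpen U) (hV : IsOpen V) (hf : DifferentiableOn 𝕜 f U)
    (hg : DifferentiableOn 𝕜 g V) (hfg : EqOn f g (U ∩ V)) :
    DifferentiableOn 𝕜 (U.piecewise f g) (U ∪ V) := by
  rintro z (hz | hz)
  · have hloc : U.piecewise f g =ᶠ[𝓝 z] f := by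
      filter_upwards [hU.mem_nhds hz] with w hw using piecewise_eq_of_mem U f g hw
    exact ((hf z hz).differentiableAt (hU.mem_nhds hz)).congr_of_eventuallyEq hloc
      |>.differentiableWithinAt
  · have hloc : U.piecewise f g =ᶠ[𝓝 z] g := by
      filter_upwards [hV.mem_nhds hz] with w hw
      by_cases hwU : w ∈ U
      · rw [piecewise_eq_of_mem U f g hwU, hfg ⟨hwU, hw⟩]
      · exact piecewise_eq_of_notMem U f g hwU
    exact ((hg z hz).differentiableAt (hV.mem_nhds hz)).congr_of_eventuallyEq hloc
      |>.differentiableWithinAt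

end Gluing

namespace Complex

theorem eqOn_of_preconnected_of_eq_on_real {U : Set ℂ} (hU : IsOpen U) (hUp : IsPreconnected U)
    {x₀ : ℝ} (hx₀ : (x₀ : ℂ) ∈ U) {f g : ℂ → ℂ} (hf : DifferentiableOn ℂ f U)
    (hg : DifferentiableOn ℂ g U) (hfg : ∀ x : ℝ, (x : ℂ) ∈ U → f x = g x) : EqOn f g U := by
  have hlim : Tendsto ((↑) : ℝ → ℂ) (𝓝[≠] x₀) (𝓝[≠] (x₀ : ℂ)) :=
    tendsto_nhdsWithin_of_tendsto_nhds_of_eventually_within _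
      continuous_ofReal.continuousWithinAt.tendsto
      (eventually_nhdsWithin_of_forall fun x hx => by simpa using hx)
  have hreal : ∀ᶠ x : ℝ in 𝓝[≠] x₀, f x = g x := eventually_nhdsWithin_of_eventually_nhds <| by
    filter_upwards [continuous_ofReal.continuousAt.preimage_mem_nhds (hU.mem_nhds hx₀)]
      with x hx using hfg x hx
  exact (hf.analyticOnNhd hU).eqOn_of_preconnected_of_frequently_eq (hg.analyticOnNhd hU) hUp hx₀
    (hlim.frequently hreal.frequently)


theorem exp_mem_slitPlane_of_abs_im_lt {w : ℂ} (h : |w.im| < Real.pi) : exp w ∈ slitPlane := by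
  have harg : arg (exp w) = w.im := by
    rw [arg_exp, toIocMod_eq_self]
    constructor <;> linarith [abs_lt.mp h]
  rw [mem_slitPlane_iff_arg, harg]
  exact ⟨(abs_lt.mp h).2.ne, exp_ne_zero w⟩

theorem one_add_mem_slitPlane {z : ℂ} (hz : z ∈ slitPlane) : 1 + z ∈ slitPlane := by
  rw [mem_slitPlane_iff] at hz ⊢
  simp only [add_re, one_re, add_im, one_im, zero_add]
  rcases hz with hz | hz
  · exact Or.inl (by linarith)
  · exact Or.inr hz

theorem one_add_exp_mem_slitPlane {w : ℂ} (h : w.re < 0 ∨ |w.im| < Real.pi) :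
    1 + exp w ∈ slitPlane := by
  rcases h with h | h
  · exact mem_slitPlane_of_norm_lt_one (by rwa [norm_exp, Real.exp_lt_one_iff])
  · exact one_add_mem_slitPlane (exp_mem_slitPlane_of_abs_im_lt h)

end Complex

noncomputable def logOneAddExp (w : ℂ) : ℂ := log (1 + exp w)

theorem differentiableAt_logOneAddExp {w : ℂ} (h : w.re < 0 ∨ |w.im| < Real.pi) :
    DifferentiableAt ℂ logOneAddExp w :=
  ((differentiableAt_exp.const_add 1).clog (one_add_exp_mem_slitPlane h))

theorem logOneAddExp_ofReal (x : ℝ) :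
    logOneAddExp x = (Real.log (1 + Real.exp x) : ℂ) := by
  rw [ofReal_log (by positivity), logOneAddExp]
  push_cast
  rfl

theorem Real.log_one_add_exp (t : ℝ) :
    Real.log (1 + Real.exp t) = t + Real.log (1 + Real.exp (-t)) := by
  have hfactor : 1 + Real.exp t = Real.exp t * (1 + Real.exp (-t)) := by
    rw [mul_add, ← Real.exp_add, add_neg_cancel, Real.exp_zero, mul_one, add_comm]
  rw [hfactor, Real.log_mul (Real.exp_ne_zero t) (by positivity), Real.log_exp]

theorem gBeta_eq (β μ x : ℝ) :
    gBeta β μ x = -(2 / β) * Real.log (1 + Real.exp (-(β * (x - μ)))) := by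
  have h : 1 - fermiDirac β (x - μ) = (1 + Real.exp (-(β * (x - μ))))⁻¹ := by
    rw [fermiDirac, Real.exp_neg]
    field_simp
    ring
  rw [gBeta, h, Real.log_inv]
  ring

def imStrip (c : ℝ) : Set ℂ := {z | |z.im| < c}

theorem isOpen_imStrip (c : ℝ) : IsOpen (imStrip c) :=
  isOpen_lt continuous_im.abs continuous_const

theorem convex_imStrip (c : ℝ) : Convex ℝ (imStrip c) := by
  have h : imStrip c = {z : ℂ | z.im < c} ∩ {z : ℂ | -c < z.im} := by
    ext z
    simp [imStrip, abs_lt, and_comm]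
  rw [h]
  exact (convex_halfSpace_im_lt c).inter (convex_halfSpace_im_gt (-c))

theorem mem_omegaSet_iff {β μ : ℝ} {z : ℂ} :
    z ∈ OmegaSet β μ ↔ z.re ≠ μ ∨ |z.im| < Real.pi / β := by
  constructor
  · intro h
    by_contra! hc
    exact h z.im hc.2 (ext (by simp [hc.1]) (by simp))
  · rintro (h | h) r hr rfl
    · simp at h
    · simp only [add_im, ofReal_im, mul_im, ofReal_re, I_im, mul_one, I_re, mul_zero,
        zero_add, add_zero] at h
      linarith

theorem omegaSet_eq_union (β μ : ℝ) :
    OmegaSet β μ = {z | z.re < μ} ∪ ({z | μ < z.re} ∪ imStrip (Real.pi / β)) := by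
  ext z
  rw [mem_omegaSet_iff, ne_iff_lt_or_gt, or_assoc]
  rfl

theorem ofReal_mem_omegaSet {β : ℝ} (hβ : 0 < β) (μ x : ℝ) : (x : ℂ) ∈ OmegaSet β μ :=
  mem_omegaSet_iff.mpr (Or.inr (by simpa using div_pos Real.pi_pos hβ))

theorem isOpen_omegaSet (β μ : ℝ) : IsOpen (OmegaSet β μ) := by
  rw [omegaSet_eq_union]
  exact (isOpen_lt continuous_re continuous_const).union
    ((isOpen_lt continuous_const continuous_re).union (isOpen_imStrip _))

theorem isPreconnected_omegaSet {β : ℝ} (hβ : 0 < β) (μ : ℝ) :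
    IsPreconnected (OmegaSet β μ) := by
  have hstrip (x : ℝ) : (x : ℂ) ∈ imStrip (Real.pi / β) := by
    simpa [imStrip] using div_pos Real.pi_pos hβ
  rw [omegaSet_eq_union]
  refine (convex_halfSpace_re_lt μ).isPreconnected.union ((μ - 1 : ℝ) : ℂ) (by simp)
    (Or.inr (hstrip _)) ?_
  exact (convex_halfSpace_re_gt μ).isPreconnected.union ((μ + 1 : ℝ) : ℂ) (by simp)
    (hstrip _) (convex_imStrip _).isPreconnected

noncomputable def gBetaRight (β μ : ℝ) (z : ℂ) : ℂ :=
  -(2 / β) * logOneAddExp (-(β * (z - μ)))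

noncomputable def gBetaLeft (β μ : ℝ) (z : ℂ) : ℂ :=
  2 * (z - μ) - (2 / β) * logOneAddExp (β * (z - μ))

theorem gBetaRight_ofReal (β μ x : ℝ) : gBetaRight β μ x = gBeta β μ x := by
  rw [gBeta_eq, gBetaRight, ← ofReal_sub, ← ofReal_mul, ← ofReal_neg, logOneAddExp_ofReal]
  push_cast
  ring

theorem gBetaLeft_ofReal {β : ℝ} (hβ : β ≠ 0) (μ x : ℝ) : gBetaLeft β μ x = gBeta β μ x := by
  rw [gBeta_eq, gBetaLeft, ← ofReal_sub, ← ofReal_mul, logOneAddExp_ofReal,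
    Real.log_one_add_exp]
  have hβ' : (β : ℂ) ≠ 0 := ofReal_ne_zero.mpr hβ
  push_cast
  field_simp
  ring

theorem differentiableOn_gBetaRight {β : ℝ} (hβ : 0 < β) (μ : ℝ) :
    DifferentiableOn ℂ (gBetaRight β μ) ({z | μ < z.re} ∪ imStrip (Real.pi / β)) := by
  intro z hz
  have hw : (-(β * (z - μ)) : ℂ).re < 0 ∨ |(-(β * (z - μ)) : ℂ).im| < Real.pi := by
    simp only [neg_re, neg_im, re_ofReal_mul, im_ofReal_mul, sub_re, sub_im, ofReal_re,
      ofReal_im, sub_zero, abs_neg, abs_mul, abs_of_pos hβ]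
    rcases hz with hz | hz
    · exact Or.inl (neg_neg_of_pos (mul_pos hβ (sub_pos.mpr hz)))
    · exact Or.inr (by rwa [← lt_div_iff₀' hβ])
  have hinner : DifferentiableAt ℂ (fun z : ℂ => -(β * (z - μ))) z := by fun_prop
  exact (((differentiableAt_logOneAddExp hw).comp z hinner).const_mul _).differentiableWithinAt

theorem differentiableOn_gBetaLeft {β : ℝ} (hβ : 0 < β) (μ : ℝ) :
    DifferentiableOn ℂ (gBetaLeft β μ) {z | z.re < μ} := by
  intro z hz
  have hw : ((β * (z - μ)) : ℂ).re < 0 := by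
    simpa [re_ofReal_mul] using mul_neg_of_pos_of_neg hβ (sub_neg.mpr hz)
  have hinner : DifferentiableAt ℂ (fun z : ℂ => (β * (z - μ) : ℂ)) z := by fun_prop
  have hlog := (differentiableAt_logOneAddExp (Or.inl hw)).comp z hinner
  exact (((differentiableAt_id.sub_const _).const_mul 2).sub
    (hlog.const_mul _)).differentiableWithinAt

theorem gBetaLeft_eqOn_gBetaRight {β : ℝ} (hβ : 0 < β) (μ : ℝ) :
    EqOn (gBetaLeft β μ) (gBetaRight β μ)
      ({z | z.re < μ} ∩ ({z | μ < z.re} ∪ imStrip (Real.pi / β))) := by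
  rintro z ⟨hleft, hz | hz⟩
  · exact absurd ((hz : μ < z.re).trans hleft) (lt_irrefl μ)
  have hU : IsOpen ({z : ℂ | z.re < μ} ∩ imStrip (Real.pi / β)) :=
    (isOpen_lt continuous_re continuous_const).inter (isOpen_imStrip _)
  have hμ : ((μ - 1 : ℝ) : ℂ) ∈ {z : ℂ | z.re < μ} ∩ imStrip (Real.pi / β) := by
    simpa [imStrip] using div_pos Real.pi_pos hβ
  have hUp : IsPreconnected ({z : ℂ | z.re < μ} ∩ imStrip (Real.pi / β)) :=
    ((convex_halfSpace_re_lt μ).inter (convex_imStrip _)).isPreconnected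
  refine eqOn_of_preconnected_of_eq_on_real hU hUp hμ
    ((differentiableOn_gBetaLeft hβ μ).mono inter_subset_left)
    ((differentiableOn_gBetaRight hβ μ).mono (inter_subset_right.trans subset_union_right))
    (fun x _ => ?_) ⟨hleft, hz⟩
  rw [gBetaLeft_ofReal hβ.ne', gBetaRight_ofReal]

/-- For `β ∈ (0,∞)` and `μ ∈ ℝ` there exists a holomorphic function `G`
on `Ω_β = ℂ \ {μ + ir : |r| ≥ π/β}` which agrees with `x ↦ (2/β)·log(1 − f_β(x−μ))` on the
real axis; moreover any two such holomorphic extensions agree on all of `Ω_β`. -/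
theorem stmt0 (β μ : ℝ) (hβ : 0 < β) :
    (∃ G : ℂ → ℂ, DifferentiableOn ℂ G (OmegaSet β μ) ∧
      ∀ x : ℝ, G (x : ℂ) = ((gBeta β μ x : ℝ) : ℂ)) ∧
    (∀ G₁ G₂ : ℂ → ℂ,
      (DifferentiableOn ℂ G₁ (OmegaSet β μ) ∧ ∀ x : ℝ, G₁ (x : ℂ) = ((gBeta β μ x : ℝ) : ℂ)) →
      (DifferentiableOn ℂ G₂ (OmegaSet β μ) ∧ ∀ x : ℝ, G₂ (x : ℂ) = ((gBeta β μ x : ℝ) : ℂ)) →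
      Set.EqOn G₁ G₂ (OmegaSet β μ)) := by
  constructor
  · classical
    refine ⟨{z | z.re < μ}.piecewise (gBetaLeft β μ) (gBetaRight β μ), ?_, fun x => ?_⟩
    · rw [omegaSet_eq_union]
      exact DifferentiableOn.piecewise_of_eqOn_inter (isOpen_lt continuous_re continuous_const)
        ((isOpen_lt continuous_const continuous_re).union (isOpen_imStrip _))
        (differentiableOn_gBetaLeft hβ μ) (differentiableOn_gBetaRight hβ μ)
        (gBetaLeft_eqOn_gBetaRight hβ μ)
    · by_cases hx : (x : ℂ) ∈ {z : ℂ | z.re < μ}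
      · rw [piecewise_eq_of_mem _ _ _ hx, gBetaLeft_ofReal hβ.ne']
      · rw [piecewise_eq_of_notMem _ _ _ hx, gBetaRight_ofReal]
  · rintro G₁ G₂ ⟨hd₁, hr₁⟩ ⟨hd₂, hr₂⟩
    exact eqOn_of_preconnected_of_eq_on_real (isOpen_omegaSet β μ) (isPreconnected_omegaSet hβ μ)
      (ofReal_mem_omegaSet hβ μ 0) hd₁ hd₂ fun x _ => (hr₁ x).trans (hr₂ x).symm
end

section
/- Two-centre exponential lattice sum. Fix d ≥ 1 and 𝔪 > 0. There exists C > 0, depending only on d and 𝔪, such that for every set Y ⊂ ℝ^d whose points have pairwise distances at least 𝔪, every pair a, b ∈ ℝ^d, and every η > 0, one has Σ_{p ∈ Y} e^{−η(|a − p| + |p − b|)} ≤ C (1 + η^{−d}) (1 + |a − b|)^d e^{−η|a − b|}. -/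
/-!
Write `D = |a - b|` and `s(p) = |a - p| + |p - b| - D ≥ 0`, so the summand is
`e^{-ηD} e^{-η s(p)}`. With `x = e^{-η}`, bounding `e^{-ηs} ≤ x^⌊s⌋ = Σ_{m ≥ ⌊s⌋} (1 - x) x^m` and
exchanging the sums gives `Σ_p e^{-η s(p)} ≤ Σ_m (1 - x) x^m #{p : s(p) ≤ m + 1}`. Points with
`s(p) ≤ m + 1` lie in a ball of radius `D + m + 1` about `a`, and disjoint balls of radius `𝔪/2`
around them bound their number by `((2/𝔪 + 1)(1 + D)(m + 1))^d`. Finally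
`Σ_m (1 - x) x^m (m + 1)^d ≤ d! (1 - x)^{-d} ≤ d! (1 + η⁻¹)^d`; the weight `1 - x` is what
allows counting whole sublevel sets instead of shells without losing a power of `η⁻¹`.
-/

open Real ENNReal Metric MeasureTheory Module
open scoped Nat

theorem Finset.card_le_of_pairwise_le_dist {E : Type*} [NormedAddCommGroup E] [NormedSpace ℝ E]
    [FiniteDimensional ℝ E] {T : Finset E} {a : E} {R 𝔪 : ℝ} (hR : 0 ≤ R) (h𝔪 : 0 < 𝔪)
    (hT : ↑T ⊆ closedBall a R) (hsep : (T : Set E).Pairwise (𝔪 ≤ dist · ·)) :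
    (T.card : ℝ) ≤ (2 * R / 𝔪 + 1) ^ finrank ℝ E := by
  borelize E
  set μ : Measure E := Measure.addHaar
  set r := 𝔪 / 2 with hr_def
  have hr : 0 < r := by positivity
  have hdisj : (T : Set E).PairwiseDisjoint (ball · r) := fun p hp q hq hpq =>
    ball_disjoint_ball (by linarith [hsep hp hq hpq])
  have hcover : ⋃ p ∈ T, ball p r ⊆ ball a (R + r) := by
    simp only [Set.iUnion_subset_iff]
    intro p hp
    exact ball_subset_ball' (by linarith [mem_closedBall.mp (hT hp)])
  have hvol : T.card * μ (ball 0 r) ≤ μ (ball 0 (R + r)) :=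
    calc T.card * μ (ball 0 r) = ∑ p ∈ T, μ (ball p r) := by
          simp [Measure.addHaar_ball_center]
      _ = μ (⋃ p ∈ T, ball p r) :=
          (measure_biUnion_finset hdisj fun _ _ => measurableSet_ball).symm
      _ ≤ μ (ball a (R + r)) := measure_mono hcover
      _ = μ (ball 0 (R + r)) := by rw [Measure.addHaar_ball_center]
  rw [Measure.addHaar_ball_of_pos μ 0 hr,
    Measure.addHaar_ball_of_pos μ 0 (show 0 < R + r by positivity), ← mul_assoc,
    ENNReal.mul_le_mul_iff_left (measure_ball_pos μ _ one_pos).ne' measure_ball_lt_top.ne,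
    ← ENNReal.ofReal_natCast,
    ← ENNReal.ofReal_mul (by positivity), ENNReal.ofReal_le_ofReal_iff (by positivity)] at hvol
  calc (T.card : ℝ) ≤ (R + r) ^ finrank ℝ E / r ^ finrank ℝ E := by
        rwa [le_div_iff₀ (by positivity)]
    _ = (2 * R / 𝔪 + 1) ^ finrank ℝ E := by
        rw [← div_pow, hr_def]
        congr 1
        field_simp

theorem Set.encard_le_of_pairwise_le_dist {E : Type*} [NormedAddCommGroup E] [NormedSpace ℝ E]
    [FiniteDimensional ℝ E] {S : Set E} {a : E} {R 𝔪 : ℝ} (hR : 0 ≤ R) (h𝔪 : 0 < 𝔪)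
    (hS : S ⊆ closedBall a R) (hsep : S.Pairwise (𝔪 ≤ dist · ·)) :
    (S.encard : ℝ≥0∞) ≤ ENNReal.ofReal ((2 * R / 𝔪 + 1) ^ finrank ℝ E) := by
  set N := ⌊(2 * R / 𝔪 + 1) ^ finrank ℝ E⌋₊
  suffices h : S.encard ≤ N by
    calc (S.encard : ℝ≥0∞) ≤ (N : ℕ∞) := ENat.toENNReal_le.mpr h
      _ = ENNReal.ofReal N := by simp
      _ ≤ _ := ENNReal.ofReal_le_ofReal (Nat.floor_le (by positivity))
  by_contra! hlt
  obtain ⟨T, hTS, hTcard⟩ := Set.exists_subset_encard_eq (Order.add_one_le_of_lt hlt)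
  have hTfin : T.Finite := Set.finite_of_encard_eq_coe hTcard
  lift T to Finset E using hTfin
  have hcard : T.card = N + 1 := by exact_mod_cast hTcard
  have hT := Finset.card_le_of_pairwise_le_dist hR h𝔪 (hTS.trans hS) (hsep.mono hTS)
  rw [hcard] at hT
  push_cast at hT
  linarith [Nat.lt_floor_add_one ((2 * R / 𝔪 + 1) ^ finrank ℝ E)]

theorem pow_le_factorial_mul_choose (m d : ℕ) :
    ((m : ℝ) + 1) ^ d ≤ d ! * ((m + d).choose d : ℕ) := by
  have h : (m + 1) ^ d ≤ d ! * (m + d).choose d :=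
    (Nat.pow_succ_le_ascFactorial (m + 1) d).trans
      (Nat.ascFactorial_eq_factorial_mul_choose m d).le
  exact_mod_cast h

theorem tsum_ofReal_geometric_mul_pow_le {x : ℝ} (hx0 : 0 ≤ x) (hx1 : x < 1) (d : ℕ) :
    ∑' m : ℕ, ENNReal.ofReal ((1 - x) * x ^ m * (m + 1) ^ d) ≤
      ENNReal.ofReal (d ! / (1 - x) ^ d) := by
  have hx : ‖x‖ < 1 := by rwa [norm_of_nonneg hx0]
  have hpos : 0 < 1 - x := by linarith
  have hsum := ((hasSum_choose_mul_geometric_of_norm_lt_one d hx).mul_left ((1 - x) * d !))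
  calc ∑' m : ℕ, ENNReal.ofReal ((1 - x) * x ^ m * (m + 1) ^ d)
      ≤ ∑' m : ℕ, ENNReal.ofReal ((1 - x) * d ! * ((m + d).choose d * x ^ m)) := by
        refine ENNReal.tsum_le_tsum fun m => ENNReal.ofReal_le_ofReal ?_
        calc (1 - x) * x ^ m * (m + 1) ^ d
            ≤ (1 - x) * x ^ m * (d ! * ((m + d).choose d : ℕ)) := by
              gcongr; exact pow_le_factorial_mul_choose m d
          _ = _ := by ring
    _ = ENNReal.ofReal ((1 - x) * d ! * (1 / (1 - x) ^ (d + 1))) := by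
        rw [← ENNReal.ofReal_tsum_of_nonneg (fun m => by positivity) hsum.summable, hsum.tsum_eq]
    _ = ENNReal.ofReal (d ! / (1 - x) ^ d) := by
        congr 1
        field_simp
        ring

theorem inv_one_sub_exp_neg_le {η : ℝ} (hη : 0 < η) : (1 - exp (-η))⁻¹ ≤ 1 + η⁻¹ := by
  have h : exp (-η) ≤ (1 + η)⁻¹ := by
    rw [exp_neg]
    exact inv_anti₀ (by positivity) (by linarith [add_one_le_exp η])
  calc (1 - exp (-η))⁻¹ ≤ (1 - (1 + η)⁻¹)⁻¹ := by
        gcongr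
        rw [sub_pos, inv_lt_one₀ (by positivity)]
        linarith
    _ = 1 + η⁻¹ := by field_simp [hη.ne']; ring

theorem ofReal_exp_neg_mul_le_tsum {η s : ℝ} (hη : 0 < η) (hs : 0 ≤ s) :
    ENNReal.ofReal (exp (-η * s)) ≤
      ∑' m : ℕ, if s ≤ m + 1 then ENNReal.ofReal ((1 - exp (-η)) * exp (-η) ^ m) else 0 := by
  set x := exp (-η)
  have hx0 : 0 ≤ x := (exp_pos _).le
  have hx1 : x < 1 := exp_lt_one_iff.mpr (by linarith)
  set n := ⌊s⌋₊
  have htail : HasSum (fun k : ℕ => x ^ n * (1 - x) * x ^ k) (x ^ n) := by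
    have h := (hasSum_geometric_of_lt_one hx0 hx1).mul_left (x ^ n * (1 - x))
    rwa [mul_assoc, mul_inv_cancel₀ (sub_pos.mpr hx1).ne', mul_one] at h
  calc ENNReal.ofReal (exp (-η * s)) ≤ ENNReal.ofReal (x ^ n) := by
        gcongr
        rw [← exp_nat_mul]
        exact exp_le_exp.mpr (by nlinarith [Nat.floor_le hs])
    _ = ∑' k : ℕ, ENNReal.ofReal (x ^ n * (1 - x) * x ^ k) := by
        rw [← ENNReal.ofReal_tsum_of_nonneg (fun k => by positivity) htail.summable, htail.tsum_eq]
    _ = ∑' k : ℕ,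
          (fun m : ℕ => if s ≤ m + 1 then ENNReal.ofReal ((1 - x) * x ^ m) else 0) (n + k) := by
        congr 1; ext k
        dsimp only
        rw [if_pos, pow_add]
        · ring_nf
        · push_cast
          linarith [Nat.lt_floor_add_one s, (k.cast_nonneg : (0:ℝ) ≤ k)]
    _ ≤ _ := tsum_comp_le_tsum_of_injective (add_right_injective n) _

theorem tsum_ofReal_exp_neg_mul_le {ι : Type*} {η : ℝ} (hη : 0 < η) {s : ι → ℝ}
    (hs : ∀ i, 0 ≤ s i) :
    ∑' i, ENNReal.ofReal (exp (-η * s i)) ≤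
      ∑' m : ℕ, {i | s i ≤ m + 1}.encard * ENNReal.ofReal ((1 - exp (-η)) * exp (-η) ^ m) := by
  calc ∑' i, ENNReal.ofReal (exp (-η * s i))
      ≤ ∑' i, ∑' m : ℕ,
          if s i ≤ m + 1 then ENNReal.ofReal ((1 - exp (-η)) * exp (-η) ^ m) else 0 :=
        ENNReal.tsum_le_tsum fun i => ofReal_exp_neg_mul_le_tsum hη (hs i)
    _ = _ := by
        rw [ENNReal.tsum_comm]
        congr 1; ext m
        rw [← ENNReal.tsum_set_const, tsum_subtype {i | s i ≤ m + 1} fun _ => ENNReal.ofReal _]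
        simp only [Set.indicator_apply, Set.mem_ofPred_eq]

theorem tsum_ofReal_exp_neg_mul_le_of_encard_le {ι : Type*} {η K : ℝ} (hη : 0 < η) (hK : 0 ≤ K)
    (d : ℕ) {s : ι → ℝ} (hs : ∀ i, 0 ≤ s i)
    (hcount : ∀ m : ℕ, ({i | s i ≤ m + 1}.encard : ℝ≥0∞) ≤ ENNReal.ofReal (K * (m + 1) ^ d)) :
    ∑' i, ENNReal.ofReal (exp (-η * s i)) ≤ ENNReal.ofReal (K * d ! * (1 + η⁻¹) ^ d) := by
  set x := exp (-η)
  have hx0 : 0 ≤ x := (exp_pos _).le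
  have hx1 : x < 1 := exp_lt_one_iff.mpr (by linarith)
  calc ∑' i, ENNReal.ofReal (exp (-η * s i))
      ≤ ∑' m : ℕ, ENNReal.ofReal (K * (m + 1) ^ d) * ENNReal.ofReal ((1 - x) * x ^ m) :=
        (tsum_ofReal_exp_neg_mul_le hη hs).trans (by gcongr with m; exact hcount m)
    _ = ENNReal.ofReal K * ∑' m : ℕ, ENNReal.ofReal ((1 - x) * x ^ m * (m + 1) ^ d) := by
        rw [← ENNReal.tsum_mul_left]
        congr 1; ext m
        rw [← ENNReal.ofReal_mul (by positivity), ← ENNReal.ofReal_mul hK]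
        ring_nf
    _ ≤ ENNReal.ofReal K * ENNReal.ofReal (d ! / (1 - x) ^ d) := by
        gcongr; exact tsum_ofReal_geometric_mul_pow_le hx0 hx1 d
    _ ≤ ENNReal.ofReal (K * d ! * (1 + η⁻¹) ^ d) := by
        rw [← ENNReal.ofReal_mul hK, div_eq_mul_inv, ← inv_pow, ← mul_assoc]
        gcongr
        exact inv_one_sub_exp_neg_le hη

theorem encard_le_of_dist_add_dist_le {E : Type*} [NormedAddCommGroup E] [NormedSpace ℝ E]
    [FiniteDimensional ℝ E] {𝔪 : ℝ} (h𝔪 : 0 < 𝔪) {Y : Set E} (hY : Y.Pairwise (𝔪 ≤ dist · ·))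
    (a b : E) {r : ℝ} (hr : 1 ≤ r) :
    ({p : Y | dist a p + dist (p : E) b - dist a b ≤ r}.encard : ℝ≥0∞) ≤
      ENNReal.ofReal (((2 / 𝔪 + 1) * (1 + dist a b)) ^ finrank ℝ E * r ^ finrank ℝ E) := by
  set S := ((↑) : Y → E) '' {p : Y | dist a p + dist (p : E) b - dist a b ≤ r}
  have hSY : S ⊆ Y := by rintro _ ⟨p, -, rfl⟩; exact p.2
  have hSball : S ⊆ closedBall a (dist a b + r) := by
    rintro _ ⟨p, hp, rfl⟩
    rw [mem_closedBall, dist_comm]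
    linarith [hp.out, dist_nonneg (x := (p : E)) (y := b)]
  rw [← Subtype.val_injective.encard_image, ← mul_pow]
  refine (Set.encard_le_of_pairwise_le_dist (by positivity) h𝔪 hSball (hY.mono hSY)).trans ?_
  gcongr
  have hu : 0 ≤ 2 / 𝔪 := by positivity
  have hD : 0 ≤ dist a b := dist_nonneg
  calc 2 * (dist a b + r) / 𝔪 + 1 = 2 / 𝔪 * (dist a b + r) + 1 := by ring
    _ ≤ _ := by
      nlinarith [mul_le_mul_of_nonneg_left hr hu, mul_le_mul_of_nonneg_left hr hD,
        mul_le_mul_of_nonneg_left (mul_le_mul_of_nonneg_left hr hD) hu]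

theorem stmt5_general (d : ℕ) (𝔪 : ℝ) (h𝔪 : 0 < 𝔪) :
    ∃ C : ℝ, 0 < C ∧
      ∀ Y : Set (EuclideanSpace ℝ (Fin d)),
        (∀ p ∈ Y, ∀ q ∈ Y, p ≠ q → 𝔪 ≤ dist p q) →
        ∀ (a b : EuclideanSpace ℝ (Fin d)) (η : ℝ), 0 < η →
          (∑' p : Y, ENNReal.ofReal
              (Real.exp (-η * (dist a (p : EuclideanSpace ℝ (Fin d)) +
                dist (p : EuclideanSpace ℝ (Fin d)) b)))) ≤
            ENNReal.ofReal
              (C * (1 + η⁻¹ ^ d) * (1 + dist a b) ^ d * Real.exp (-η * dist a b)) := by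
  refine ⟨d ! * 2 ^ (d - 1) * (2 / 𝔪 + 1) ^ d, by positivity, fun Y hY a b η hη => ?_⟩
  set K := ((2 / 𝔪 + 1) * (1 + dist a b)) ^ d
  have hcount (m : ℕ) := encard_le_of_dist_add_dist_le h𝔪 hY a b (r := m + 1) (by simp)
  simp only [finrank_euclideanSpace_fin] at hcount
  have hsplit := add_pow_le zero_le_one (inv_nonneg.mpr hη.le) d
  calc _ = ENNReal.ofReal (exp (-η * dist a b)) * ∑' p : Y, ENNReal.ofReal
          (exp (-η * (dist a p + dist (p : EuclideanSpace ℝ (Fin d)) b - dist a b))) := by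
        rw [← ENNReal.tsum_mul_left]
        congr 1; ext p
        rw [← ENNReal.ofReal_mul (exp_pos _).le, ← exp_add]
        ring_nf
    _ ≤ ENNReal.ofReal (exp (-η * dist a b)) * ENNReal.ofReal (K * d ! * (1 + η⁻¹) ^ d) := by
        gcongr
        exact tsum_ofReal_exp_neg_mul_le_of_encard_le hη (by positivity) d
          (fun p => by linarith [dist_triangle a p b]) hcount
    _ ≤ _ := by
        rw [← ENNReal.ofReal_mul (exp_pos _).le]
        apply ENNReal.ofReal_le_ofReal
        rw [one_pow] at hsplit
        have hP : 0 ≤ exp (-η * dist a b) * K * d ! := by positivity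
        have hscaled := mul_le_mul_of_nonneg_left hsplit hP
        simp only [K, mul_pow] at hscaled ⊢
        linarith

/-- **two-centre exponential lattice sum.** Fix `d ≥ 1` and `𝔪 > 0`. There is
`C = C(d,𝔪) > 0` such that for every set `Y ⊂ ℝ^d` with pairwise distances at least `𝔪`,
all `a, b ∈ ℝ^d` and every `η > 0`,
`Σ_{p∈Y} e^{−η(|a−p|+|p−b|)} ≤ C (1 + η^{−d}) (1 + |a−b|)^d e^{−η|a−b|}`. -/
theorem stmt5 (d : ℕ) (hd : 1 ≤ d) (𝔪 : ℝ) (h𝔪 : 0 < 𝔪) :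
    ∃ C : ℝ, 0 < C ∧
      ∀ Y : Set (EuclideanSpace ℝ (Fin d)),
        (∀ p ∈ Y, ∀ q ∈ Y, p ≠ q → 𝔪 ≤ dist p q) →
        ∀ (a b : EuclideanSpace ℝ (Fin d)) (η : ℝ), 0 < η →
          (∑' p : Y, ENNReal.ofReal
              (Real.exp (-η * (dist a (p : EuclideanSpace ℝ (Fin d)) +
                dist (p : EuclideanSpace ℝ (Fin d)) b)))) ≤
            ENNReal.ofReal
              (C * (1 + η⁻¹ ^ d) * (1 + dist a b) ^ d * Real.exp (-η * dist a b)) :=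
  stmt5_general d 𝔪 h𝔪
end

section
/- Weyl-type stability of the spectrum under finite-rank plus small perturbations. Let 𝓗 be a complex Hilbert space and let S, K, P be bounded self-adjoint operators on 𝓗 with K of finite rank and ‖P‖ ≤ δ for some δ ≥ 0. Then for every η > 0 the set {λ ∈ σ(S + K + P) : dist(λ, σ(S)) ≥ δ + η} is finite. -/
open scoped InnerProductSpace
open Filter Topology Module End

/-!
For self-adjoint `S`, the continuous functional calculus bounds the resolvent norm
`‖(z - S)⁻¹‖` by `1 / dist(z, σ(S))`. If `dist(z, σ(S)) ≥ δ + η`, a Neumann series then shows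
`dist(z, σ(S + P)) ≥ η`, so `‖(z - S - P) x‖ ≥ η ‖x‖`. If moreover `z ∈ σ(S + P + K)`, the
Fredholm alternative for the compact operator `(z - S - P)⁻¹ K` makes `z` an eigenvalue, and a
unit eigenvector `v` has `‖K v‖ = ‖(z - S - P) v‖ ≥ η`. Unit eigenvectors of the self-adjoint
`S + K + P` for distinct eigenvalues are orthonormal, while by Bessel's inequality a finite-rank
`K` sends every orthonormal family to a family tending to `0`; so there are only finitely many
such `z`.
-/

section CStarAlgebra

variable {A : Type*} [CStarAlgebra A]

lemma norm_ringInverse_algebraMap_sub_le {a : A} [IsStarNormal a] {z : ℂ} {ε : ℝ} (hε : 0 < ε)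
    (h : ∀ w ∈ spectrum ℂ a, ε ≤ ‖z - w‖) :
    ‖Ring.inverse (algebraMap ℂ A z - a)‖ ≤ ε⁻¹ := by
  have hne : ∀ w ∈ spectrum ℂ a, z - w ≠ 0 := fun w hw hzw => by
    linarith [h w hw, norm_zero (E := ℂ) ▸ congrArg norm hzw]
  have hcfc : cfc (fun w => z - w) a = algebraMap ℂ A z - a := by
    rw [cfc_sub .., cfc_const z a, cfc_id' ℂ a]
  rw [← hcfc, ← cfc_inv (fun w => z - w) a hne]
  refine norm_cfc_le (by positivity) fun w hw => ?_
  rw [norm_inv]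
  exact inv_anti₀ hε (h w hw)

lemma notMem_spectrum_of_forall_le_norm_sub {a : A} {z : ℂ} {ε : ℝ} (hε : 0 < ε)
    (h : ∀ w ∈ spectrum ℂ a, ε ≤ ‖z - w‖) : z ∉ spectrum ℂ a := fun hz => by
  simpa using (h z hz).trans_lt' hε

lemma notMem_spectrum_add_of_norm_lt {a : A} [IsStarNormal a] (b : A) {z : ℂ} {ε : ℝ}
    (hb : ‖b‖ < ε) (h : ∀ w ∈ spectrum ℂ a, ε ≤ ‖z - w‖) : z ∉ spectrum ℂ (a + b) := by
  have hε : 0 < ε := (norm_nonneg b).trans_lt hb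
  obtain ⟨u, hu⟩ := spectrum.notMem_iff.mp (notMem_spectrum_of_forall_le_norm_sub hε h)
  have hinv : ‖(↑u⁻¹ : A)‖ ≤ ε⁻¹ := by
    simpa [← hu] using norm_ringInverse_algebraMap_sub_le hε h
  have hsmall : ‖(↑u⁻¹ : A) * b‖ < 1 := calc
    _ ≤ ‖(↑u⁻¹ : A)‖ * ‖b‖ := norm_mul_le _ _
    _ ≤ ε⁻¹ * ‖b‖ := by gcongr
    _ < ε⁻¹ * ε := by gcongr
    _ = 1 := inv_mul_cancel₀ hε.ne'
  have hfac : algebraMap ℂ A z - (a + b) = u * (1 - (↑u⁻¹ : A) * b) := by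
    rw [mul_sub, mul_one, u.mul_inv_cancel_left, hu]
    abel
  rw [spectrum.notMem_iff, hfac]
  exact u.isUnit.mul (Units.oneSub _ hsmall).isUnit

lemma le_norm_sub_of_mem_spectrum_add {a : A} [IsStarNormal a] {b : A} {z ν : ℂ} {r : ℝ}
    (h : ∀ w ∈ spectrum ℂ a, ‖b‖ + r ≤ ‖z - w‖) (hν : ν ∈ spectrum ℂ (a + b)) :
    r ≤ ‖z - ν‖ := by
  by_contra! hlt
  refine notMem_spectrum_add_of_norm_lt b (ε := ‖b‖ + r - ‖z - ν‖) (by linarith)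
    (fun w hw => ?_) hν
  have := norm_sub_le_norm_sub_add_norm_sub z ν w
  linarith [h w hw, norm_sub_rev ν z]

end CStarAlgebra

section Compact

variable {𝕜 X Y : Type*} [NontriviallyNormedField 𝕜] [NormedAddCommGroup X] [NormedSpace 𝕜 X]
  [NormedAddCommGroup Y] [NormedSpace 𝕜 Y]

lemma ContinuousLinearMap.isCompactOperator_of_finiteDimensional_range [LocallyCompactSpace 𝕜]
    (f : X →L[𝕜] Y) [FiniteDimensional 𝕜 (LinearMap.range (f : X →ₗ[𝕜] Y))] :
    IsCompactOperator f := by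
  have : ProperSpace (LinearMap.range (f : X →ₗ[𝕜] Y)) := FiniteDimensional.proper 𝕜 _
  exact (isCompactOperator_of_locallyCompactSpace_dom f.rangeRestrict).continuous_comp
    continuous_subtype_val

lemma hasEigenvalue_add_of_mem_spectrum [CompleteSpace X] {B K : X →L[𝕜] X}
    (hK : IsCompactOperator K) {z : 𝕜} (hB : z ∉ spectrum 𝕜 B) (hz : z ∈ spectrum 𝕜 (B + K)) :
    HasEigenvalue ((B + K : X →L[𝕜] X) : End 𝕜 X) z := by
  obtain ⟨u, hu⟩ := spectrum.notMem_iff.mp hB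
  have hfac : algebraMap 𝕜 _ z - (B + K) = u * (1 - (↑u⁻¹ : X →L[𝕜] X) * K) := by
    rw [mul_sub, mul_one, u.mul_inv_cancel_left, hu]
    abel
  -- the Fredholm alternative for the compact `(z - B)⁻¹ K` at `1` yields the eigenvector
  have h1 : (1 : 𝕜) ∈ spectrum 𝕜 ((↑u⁻¹ : X →L[𝕜] X) * K) := by
    rw [spectrum.mem_iff, map_one]
    exact fun h => spectrum.mem_iff.mp hz (hfac ▸ u.isUnit.mul h)
  obtain ⟨v, hv, hv0⟩ := ((IsCompactOperator.hasEigenvalue_iff_mem_spectrum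
    (hK.clm_comp _) one_ne_zero).mpr h1).exists_hasEigenvector
  rw [mem_eigenspace_iff, one_smul] at hv
  have hKv : K v = (u : X →L[𝕜] X) v := by
    conv_rhs => rw [← hv]
    exact (congrArg (· (K v)) u.mul_inv).symm
  refine hasEigenvalue_of_hasEigenvector ⟨mem_eigenspace_iff.mpr ?_, hv0⟩
  simp [hKv, hu, Algebra.algebraMap_eq_smul_one]

end Compact

section Hilbert

variable {𝕜 E F ι : Type*} [RCLike 𝕜] [NormedAddCommGroup E] [InnerProductSpace 𝕜 E]
  [NormedAddCommGroup F] [InnerProductSpace 𝕜 F]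

lemma Orthonormal.tendsto_inner_cofinite_zero {v : ι → E} (hv : Orthonormal 𝕜 v) (x : E) :
    Tendsto (fun i => ⟪x, v i⟫_𝕜) cofinite (𝓝 0) := by
  have hsq := (hv.inner_products_summable (x := x)).tendsto_cofinite_zero
  rw [tendsto_zero_iff_norm_tendsto_zero]
  simpa [norm_inner_symm] using hsq.sqrt

lemma ContinuousLinearMap.tendsto_apply_orthonormal_cofinite_zero [CompleteSpace E]
    [CompleteSpace F] (K : E →L[𝕜] F) [FiniteDimensional 𝕜 (LinearMap.range (K : E →ₗ[𝕜] F))]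
    {v : ι → E} (hv : Orthonormal 𝕜 v) : Tendsto (fun i => K (v i)) cofinite (𝓝 0) := by
  set b := stdOrthonormalBasis 𝕜 (LinearMap.range (K : E →ₗ[𝕜] F))
  have hexpand : ∀ x, K x = ∑ j, ⟪adjoint K (b j : F), x⟫_𝕜 • (b j : F) := fun x => by
    have := congrArg Subtype.val (b.sum_repr' ⟨K x, LinearMap.mem_range_self _ x⟩)
    simpa [adjoint_inner_left] using this.symm
  simp_rw [hexpand]
  simpa using tendsto_finsetSum Finset.univ fun j _ =>
    (hv.tendsto_inner_cofinite_zero (adjoint K (b j : F))).smul_const (b j : F)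

lemma LinearMap.IsSymmetric.orthonormal_of_eigenvectors {T : E →ₗ[𝕜] E} (hT : T.IsSymmetric)
    {μ : ι → 𝕜} (hμ : Function.Injective μ) {v : ι → E} (hv : ∀ i, ‖v i‖ = 1)
    (hTv : ∀ i, T (v i) = μ i • v i) : Orthonormal 𝕜 v :=
  ⟨hv, fun i j hij => hT.orthogonalFamily_eigenspaces (hμ.ne hij)
    ⟨v i, mem_eigenspace_iff.mpr (hTv i)⟩ ⟨v j, mem_eigenspace_iff.mpr (hTv j)⟩⟩

lemma LinearMap.IsSymmetric.finite_of_forall_exists_eigenvector [CompleteSpace E] [CompleteSpace F]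
    {T : E →ₗ[𝕜] E} (hT : T.IsSymmetric) (K : E →L[𝕜] F)
    [FiniteDimensional 𝕜 (LinearMap.range (K : E →ₗ[𝕜] F))] {η : ℝ} (hη : 0 < η) {Λ : Set 𝕜}
    (hΛ : ∀ μ ∈ Λ, ∃ v, ‖v‖ = 1 ∧ T v = μ • v ∧ η ≤ ‖K v‖) : Λ.Finite := by
  by_contra hinf
  have : Infinite Λ := Set.infinite_coe_iff.mpr hinf
  choose v hv hTv hKv using fun μ : Λ => hΛ μ μ.2
  have hKv0 := (K.tendsto_apply_orthonormal_cofinite_zero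
    (hT.orthonormal_of_eigenvectors Subtype.val_injective hv hTv)).norm
  rw [norm_zero] at hKv0
  obtain ⟨μ, hμ⟩ := (hKv0.eventually (gt_mem_nhds hη)).exists
  exact (hKv μ).not_gt (by simpa using hμ)

end Hilbert

section ComplexHilbert

variable {H : Type*} [NormedAddCommGroup H] [InnerProductSpace ℂ H] [CompleteSpace H]

lemma mul_norm_le_norm_algebraMap_sub_apply {a : H →L[ℂ] H} [IsStarNormal a] {z : ℂ} {ε : ℝ}
    (hε : 0 < ε) (h : ∀ w ∈ spectrum ℂ a, ε ≤ ‖z - w‖) (x : H) :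
    ε * ‖x‖ ≤ ‖(algebraMap ℂ _ z - a) x‖ := by
  have hunit := spectrum.notMem_iff.mp (notMem_spectrum_of_forall_le_norm_sub hε h)
  calc ε * ‖x‖ = ε * ‖Ring.inverse (algebraMap ℂ _ z - a) ((algebraMap ℂ _ z - a) x)‖ := by
        rw [← mul_apply_eq_comp, Ring.inverse_mul_cancel _ hunit, one_apply_eq_self]
    _ ≤ ε * (ε⁻¹ * ‖(algebraMap ℂ _ z - a) x‖) := by
        gcongr
        exact ContinuousLinearMap.le_of_opNorm_le _ (norm_ringInverse_algebraMap_sub_le hε h) _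
    _ = ‖(algebraMap ℂ _ z - a) x‖ := by field_simp

lemma exists_eigenvector_le_norm_apply_of_mem_spectrum_add {B K : H →L[ℂ] H} [IsStarNormal B]
    (hK : IsCompactOperator K) {z : ℂ} {η : ℝ} (hη : 0 < η)
    (hfar : ∀ w ∈ spectrum ℂ B, η ≤ ‖z - w‖) (hz : z ∈ spectrum ℂ (B + K)) :
    ∃ v, ‖v‖ = 1 ∧ (B + K) v = z • v ∧ η ≤ ‖K v‖ := by
  obtain ⟨v, hv, hv0⟩ := (hasEigenvalue_add_of_mem_spectrum hK
    (notMem_spectrum_of_forall_le_norm_sub hη hfar) hz).exists_hasEigenvector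
  rw [mem_eigenspace_iff] at hv
  set u := (‖v‖⁻¹ : ℂ) • v
  have hu : (B + K) u = z • u := by
    rw [map_smul, smul_comm]
    exact congrArg _ hv
  have hKu : (algebraMap ℂ _ z - B) u = K u := by
    simp [Algebra.algebraMap_eq_smul_one, ← hu]
  have hu1 : ‖u‖ = 1 := norm_smul_inv_norm hv0
  refine ⟨u, hu1, hu, ?_⟩
  simpa [hu1, hKu] using mul_norm_le_norm_algebraMap_sub_apply hη hfar u

end ComplexHilbert

theorem stmt16_general (𝓗 : Type*) [NormedAddCommGroup 𝓗] [InnerProductSpace ℂ 𝓗] [CompleteSpace 𝓗]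
    (S K P : 𝓗 →L[ℂ] 𝓗) (hS : IsSelfAdjoint S) (hK : IsSelfAdjoint K) (hP : IsSelfAdjoint P)
    (hKrank : FiniteDimensional ℂ (LinearMap.range (K : 𝓗 →ₗ[ℂ] 𝓗)))
    (δ : ℝ) (hPnorm : ‖P‖ ≤ δ) :
    ∀ η : ℝ, 0 < η →
      {z : ℂ | z ∈ spectrum ℂ (S + K + P) ∧
        ∀ w ∈ spectrum ℂ S, δ + η ≤ ‖z - w‖}.Finite := by
  intro η hη
  have : IsStarNormal S := hS.isStarNormal
  have : IsStarNormal (S + P) := (hS.add hP).isStarNormal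
  refine ((hS.add hK).add hP).isSymmetric.finite_of_forall_exists_eigenvector K hη ?_
  rintro z ⟨hz, hfar⟩
  have hfar' : ∀ w ∈ spectrum ℂ (S + P), η ≤ ‖z - w‖ := fun w hw =>
    le_norm_sub_of_mem_spectrum_add (fun w' hw' => by linarith [hfar w' hw']) hw
  rw [add_right_comm] at hz ⊢
  exact exists_eigenvector_le_norm_apply_of_mem_spectrum_add
    K.isCompactOperator_of_finiteDimensional_range hη hfar' hz

/-- **Weyl-type stability of the spectrum.** Let `S, K, P` be bounded
self-adjoint operators on a complex Hilbert space with `K` of finite rank and `‖P‖ ≤ δ`.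
Then for every `η > 0`, the set of spectral points of `S + K + P` at distance at least
`δ + η` from `σ(S)` is finite. -/
theorem stmt16 (𝓗 : Type*) [NormedAddCommGroup 𝓗] [InnerProductSpace ℂ 𝓗] [CompleteSpace 𝓗]
    (S K P : 𝓗 →L[ℂ] 𝓗) (hS : IsSelfAdjoint S) (hK : IsSelfAdjoint K) (hP : IsSelfAdjoint P)
    (hKrank : FiniteDimensional ℂ (LinearMap.range (K : 𝓗 →ₗ[ℂ] 𝓗)))
    (δ : ℝ) (hδ : 0 ≤ δ) (hPnorm : ‖P‖ ≤ δ) :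
    ∀ η : ℝ, 0 < η →
      {z : ℂ | z ∈ spectrum ℂ (S + K + P) ∧
        ∀ w ∈ spectrum ℂ S, δ + η ≤ ‖z - w‖}.Finite :=
  stmt16_general 𝓗 S K P hS hK hP hKrank δ hPnorm
end
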